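/- Identify ℝ^m with ℝ^{m−n} × ℝ^n and let e_1, …, e_n be the constant vector fields given by the standard basis vectors of the second factor. Let U ⊆ ℝ^m be open, let F be a smooth vector field on U, set W_i := [F, e_i], and assume: (a) the 2n vectors e_1(z), …, e_n(z), W_1(z), …, W_n(z) are linearly independent at every z ∈ U; (b) the span 𝒲_z := span{e_1(z), …, e_n(z), W_1(z), …, W_n(z)} is involutive in the sense that [e_i, W_j](z) ∈ 𝒲_z and [W_i, W_j](z) ∈ 𝒲_z for all z ∈ U and all i, j. Then for every z₀ ∈ U there exist an open neighbourhood U' ⊆ U of z₀ and a smooth map A : U' → (n×n real matrices) with A(z) invertible for all z ∈ U', such that the vector fields Ṽ_i := A_i^j e_j satisfy [Ṽ_i, Ṽ_j] = 0 on U' and [Ṽ_i, [F, Ṽ_j]](z) ∈ span{e_1(z), …, e_n(z)} for all z ∈ U' and all i, j. -/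

import Mathlib

/-!
Write `π` for the projection onto `ℝ^{m-n}`, whose kernel is the span of the `e_i`, and
`w_k := π [F, e_k] = -π ∂_k F`. Hypothesis (a) says the `w_k(z)` are linearly independent, and
the involutivity of `span {e_i, W_j}` says that `∂_l w_k(z) ∈ span {w_k(z)}`.

Near `z₀` choose a linear map `L` with `L (w_k(z₀)) = δ_k`; the matrix `N(z) = (L w_k(z))` is
invertible near `z₀`, and `A := N⁻¹` normalises the frame: `g_j := Σ_k A_jk w_k` satisfies
`L g_j = δ_j`. Differentiating, every vertical derivative of `g_j` lies in `span {w_k}` and is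
killed by `L`, which is injective there; so it vanishes. For `Ṽ_i := Σ_l A_il e_l` this gives
* `π [Ṽ_i, [F, Ṽ_j]] = Ṽ_i (π [F, Ṽ_j]) = Ṽ_i g_j = 0`;
* expanding `Ṽ_i g_j = 0` by the product rule and using the symmetry `∂_l w_k = ∂_k w_l` of the
  second derivatives of `F`, the linear independence of the `w_k` gives `Ṽ_i A_j = Ṽ_j A_i`,
  which is `[Ṽ_i, Ṽ_j] = 0`.
-/

/-- The Lie bracket of two vector fields (as maps `E → E`), defined via the
Fréchet derivative: `[X,Y](z) = DY(z)(X(z)) − DX(z)(Y(z))`. -/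
noncomputable def lieB {E : Type*} [NormedAddCommGroup E] [NormedSpace ℝ E]
    (X Y : E → E) : E → E :=
  fun z => fderiv ℝ Y z (X z) - fderiv ℝ X z (Y z)

/-- The constant vector field `∂/∂y^i` on `ℝ^{m−n} × ℝ^n` (here `p = m − n`). -/
def eVec (p n : ℕ) (i : Fin n) : (Fin p → ℝ) × (Fin n → ℝ) := (0, Pi.single i 1)

open Set Submodule Filter Topology

section LinearAlgebra

variable {R M N : Type*} [CommRing R] [AddCommGroup M] [Module R M] [AddCommGroup N] [Module R N]
  {n : ℕ}

theorem Matrix.isUnit_of_map_sum_smul_eq_single {A : Fin n → Fin n → R} {w : Fin n → M}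
    (L : M →ₗ[R] (Fin n → R)) (hA : ∀ j, L (∑ k, A j k • w k) = Pi.single j 1) :
    IsUnit (Matrix.of A) := by
  classical
  rw [Matrix.isUnit_iff_isUnit_det]
  refine Matrix.isUnit_det_of_right_inverse (B := Matrix.of fun k m => L (w k) m) ?_
  ext j m
  have hjm := congrFun (hA j) m
  simp only [map_sum, map_smul, Finset.sum_apply, Pi.smul_apply, smul_eq_mul] at hjm
  simp [Matrix.mul_apply, hjm, Matrix.one_apply, Pi.single_apply, eq_comm]

theorem map_mem_span_range_sumElim {ι κ : Type*} {e : ι → M} {f : κ → M} (π : M →ₗ[R] N)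
    (hπe : ∀ i, π (e i) = 0) {x : M} (hx : x ∈ span R (range (Sum.elim e f))) :
    π x ∈ span R (range fun k => π (f k)) := by
  have hmap := mem_map_of_mem (f := π) hx
  rw [map_span, ← range_comp] at hmap
  refine span_le.2 ?_ hmap
  rintro _ ⟨i | k, rfl⟩
  · simp [hπe]
  · exact subset_span ⟨k, rfl⟩

theorem LinearIndependent.map_sumElim_inr {ι κ : Type*} {e : ι → M} {f : κ → M}
    (h : LinearIndependent R (Sum.elim e f)) (π : M →ₗ[R] N)
    (hπ : LinearMap.ker π ≤ span R (range e)) : LinearIndependent R fun k => π (f k) := by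
  obtain ⟨-, hf, hdisj⟩ := linearIndependent_sum.1 h
  exact hf.map (hdisj.symm.mono_right hπ)

end LinearAlgebra

section Frames

variable {X V : Type*} [NormedAddCommGroup X] [NormedSpace ℝ X]
  [NormedAddCommGroup V] [NormedSpace ℝ V] {n : ℕ}

theorem fderiv_sum_smul_apply {a : X → Fin n → ℝ} {w : Fin n → X → V} {z : X}
    (ha : DifferentiableAt ℝ a z) (hw : ∀ k, DifferentiableAt ℝ (w k) z) (v : X) :
    fderiv ℝ (fun y => ∑ k, a y k • w k y) z v =
      ∑ k, (a z k • fderiv ℝ (w k) z v + fderiv ℝ (fun y => a y k) z v • w k z) := by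
  have ha' := differentiableAt_pi.1 ha
  rw [fderiv_fun_sum fun k _ => (ha' k).fun_smul (hw k)]
  simp [fderiv_fun_smul (ha' _) (hw _)]

theorem fderiv_sum_smul_const_apply {a : X → Fin n → ℝ} {z : X} (ha : DifferentiableAt ℝ a z)
    (e : Fin n → V) (v : X) :
    fderiv ℝ (fun y => ∑ k, a y k • e k) z v = ∑ k, fderiv ℝ (fun y => a y k) z v • e k := by
  simpa using fderiv_sum_smul_apply ha (fun k => differentiableAt_const (e k)) v

theorem fderiv_sum_smul_mem_span {a : X → Fin n → ℝ} {w : Fin n → X → V} {z v : X}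
    (ha : DifferentiableAt ℝ a z) (hw : ∀ k, DifferentiableAt ℝ (w k) z)
    (hv : ∀ k, fderiv ℝ (w k) z v ∈ span ℝ (range fun k => w k z)) :
    fderiv ℝ (fun y => ∑ k, a y k • w k y) z v ∈ span ℝ (range fun k => w k z) := by
  rw [fderiv_sum_smul_apply ha hw]
  exact sum_mem fun k _ => add_mem (smul_mem _ _ (hv k)) (smul_mem _ _ (subset_span ⟨k, rfl⟩))

theorem fderiv_apply_eq_zero_of_eventually_const {W : Type*} [NormedAddCommGroup W]
    [NormedSpace ℝ W] {g : X → V} {z v : X} {S : Submodule ℝ V} {L : V →L[ℝ] W} {c : W}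
    (hg : DifferentiableAt ℝ g z) (hL : ∀ x ∈ S, L x = 0 → x = 0)
    (hconst : (fun y => L (g y)) =ᶠ[𝓝 z] fun _ => c) (hv : fderiv ℝ g z v ∈ S) :
    fderiv ℝ g z v = 0 := by
  refine hL _ hv ?_
  have hLg : fderiv ℝ (fun y => L (g y)) z = L.comp (fderiv ℝ g z) :=
    (L.hasFDerivAt.comp z hg.hasFDerivAt).fderiv
  have h0 : fderiv ℝ (fun y => L (g y)) z = 0 := by
    rw [hconst.fderiv_eq, fderiv_const_apply]
  simpa using congrArg (· v) (hLg.symm.trans h0)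

theorem fderiv_row_symm_of_fderiv_sum_smul_eq_zero {A : X → Fin n → Fin n → ℝ}
    {w : Fin n → X → V} {e : Fin n → X} {z : X} (hA : DifferentiableAt ℝ A z)
    (hw : ∀ k, DifferentiableAt ℝ (w k) z)
    (hsymm : ∀ k l, fderiv ℝ (w k) z (e l) = fderiv ℝ (w l) z (e k))
    (hli : LinearIndependent ℝ fun k => w k z)
    (hvert : ∀ i j, fderiv ℝ (fun y => ∑ k, A y j k • w k y) z (∑ l, A z i l • e l) = 0)
    (i j k : Fin n) :
    fderiv ℝ (fun y => A y j k) z (∑ l, A z i l • e l) =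
      fderiv ℝ (fun y => A y i k) z (∑ l, A z j l • e l) := by
  set u := fun i => ∑ l, A z i l • e l
  have hexpand : ∀ i j, fderiv ℝ (fun y => ∑ k, A y j k • w k y) z (u i) =
      (∑ k, ∑ l, (A z j k * A z i l) • fderiv ℝ (w k) z (e l)) +
        ∑ k, fderiv ℝ (fun y => A y j k) z (u i) • w k z := by
    intro i j
    rw [fderiv_sum_smul_apply (differentiableAt_pi.1 hA j) hw, Finset.sum_add_distrib]
    simp [u, Finset.smul_sum, smul_smul]
  have hsecond : ∀ i j, ∑ k, ∑ l, (A z j k * A z i l) • fderiv ℝ (w k) z (e l) =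
      ∑ k, ∑ l, (A z i k * A z j l) • fderiv ℝ (w k) z (e l) := by
    intro i j
    rw [Finset.sum_comm]
    simp only [hsymm, mul_comm]
  have hcomb : ∑ k, (fderiv ℝ (fun y => A y j k) z (u i) -
      fderiv ℝ (fun y => A y i k) z (u j)) • w k z = 0 := by
    have h := (hexpand i j).symm.trans ((hvert i j).trans ((hvert j i).symm.trans (hexpand j i)))
    rw [hsecond] at h
    simp only [sub_smul, Finset.sum_sub_distrib, add_left_cancel h, sub_self]
  exact sub_eq_zero.1 (Fintype.linearIndependent_iff.1 hli _ hcomb k)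

theorem LinearIndependent.exists_clm_apply_eq_single [FiniteDimensional ℝ V] {v : Fin n → V}
    (hv : LinearIndependent ℝ v) : ∃ L : V →L[ℝ] (Fin n → ℝ), ∀ k, L (v k) = Pi.single k 1 := by
  classical
  obtain ⟨L, hL⟩ := (Fintype.linearCombination ℝ v).exists_leftInverse_of_injective
    (LinearMap.ker_eq_bot.2 (linearIndependent_iff_injective_fintypeLinearCombination.1 hv))
  refine ⟨L.toContinuousLinearMap, fun k => ?_⟩
  simpa using congrArg (· (Pi.single k 1)) hL

theorem exists_normalizing_matrix [FiniteDimensional ℝ V] {r : WithTop ℕ∞} {U : Set X}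
    (hU : IsOpen U) {w : Fin n → X → V} (hw : ∀ k, ContDiffOn ℝ r (w k) U) {z₀ : X}
    (hz₀ : z₀ ∈ U) (hli : LinearIndependent ℝ fun k => w k z₀) :
    ∃ U' ⊆ U, IsOpen U' ∧ z₀ ∈ U' ∧ ∃ A : X → Fin n → Fin n → ℝ, ContDiffOn ℝ r A U' ∧
      (∀ z ∈ U', IsUnit (Matrix.of (A z))) ∧ ∃ L : V →L[ℝ] (Fin n → ℝ),
        (∀ z ∈ U', ∀ j, L (∑ k, A z j k • w k z) = Pi.single j 1) ∧
        ∀ z ∈ U', ∀ v ∈ span ℝ (range fun k => w k z), L v = 0 → v = 0 := by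
  obtain ⟨L, hL⟩ := hli.exists_clm_apply_eq_single
  set N : X → (Fin n → ℝ) →L[ℝ] (Fin n → ℝ) :=
    fun z => ∑ k, (ContinuousLinearMap.proj k).smulRight (L (w k z))
  have hN_apply : ∀ z c, N z c = L (∑ k, c k • w k z) := by simp [N]
  have hN : ContDiffOn ℝ r N U := ContDiffOn.sum fun k _ =>
    contDiffOn_const.smulRight (L.contDiff.comp_contDiffOn (hw k))
  have hNz₀ : N z₀ = 1 := by
    ext1 c
    simp [hN_apply, hL, ← pi_eq_sum_univ']
  set U' := U ∩ N ⁻¹' {M | IsUnit M}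
  set A : X → Fin n → Fin n → ℝ := fun z j => Ring.inverse (N z) (Pi.single j 1)
  have hnorm : ∀ z ∈ U', ∀ j, L (∑ k, A z j k • w k z) = Pi.single j 1 := by
    rintro z ⟨-, hz⟩ j
    rw [← hN_apply, ← mul_apply_eq_comp, Ring.mul_inverse_cancel _ hz, one_apply_eq_self]
  refine ⟨U', inter_subset_left, hN.continuousOn.isOpen_inter_preimage hU Units.isOpen,
    ⟨hz₀, by simp [hNz₀]⟩, A, ?_,
    fun z hz => Matrix.isUnit_of_map_sum_smul_eq_single L.toLinearMap (hnorm z hz), L, hnorm, ?_⟩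
  · have hinv : ContDiffOn ℝ r (fun z => Ring.inverse (N z)) U' :=
      fun z hz => ((contDiffAt_ringInverse ℝ hz.2.unit).comp_contDiffWithinAt (g := Ring.inverse)
        z (hN z hz.1)).mono inter_subset_left
    exact contDiffOn_pi.2 fun j => hinv.clm_apply contDiffOn_const
  · rintro z ⟨-, hz⟩ v hv hLv
    obtain ⟨c, rfl⟩ := (mem_span_range_iff_exists_fun ℝ).1 hv
    have hc : c = 0 := by
      rw [← one_apply_eq_self (F := (Fin n → ℝ) →L[ℝ] (Fin n → ℝ)) c,
        ← Ring.inverse_mul_cancel _ hz, mul_apply_eq_comp, hN_apply, hLv, map_zero]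
    simp [hc]

end Frames

section LieBracket

variable {E V : Type*} [NormedAddCommGroup E] [NormedSpace ℝ E]
  [NormedAddCommGroup V] [NormedSpace ℝ V] {n : ℕ}

theorem lieB_const_left (c : E) (Y : E → E) :
    lieB (fun _ => c) Y = fun z => fderiv ℝ Y z c := by
  funext z; simp [lieB]

theorem lieB_const_right (X : E → E) (c : E) :
    lieB X (fun _ => c) = fun z => -fderiv ℝ X z c := by
  funext z; simp [lieB]

theorem ContDiffOn.lieB {X Y : E → E} {U : Set E} {r s : WithTop ℕ∞} (hX : ContDiffOn ℝ r X U)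
    (hY : ContDiffOn ℝ r Y U) (hU : IsOpen U) (hrs : s + 1 ≤ r) :
    ContDiffOn ℝ s (_root_.lieB X Y) U :=
  ((hY.fderiv_of_isOpen hU hrs).clm_apply (hX.of_le (le_trans le_self_add hrs))).sub
    ((hX.fderiv_of_isOpen hU hrs).clm_apply (hY.of_le (le_trans le_self_add hrs)))

theorem lieB_sum_smul_const (e : Fin n → E) {a b : E → Fin n → ℝ} {z : E}
    (ha : DifferentiableAt ℝ a z) (hb : DifferentiableAt ℝ b z) :
    lieB (fun y => ∑ l, a y l • e l) (fun y => ∑ l, b y l • e l) z =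
      ∑ l, (fderiv ℝ (fun y => b y l) z (∑ k, a z k • e k) -
        fderiv ℝ (fun y => a y l) z (∑ k, b z k • e k)) • e l := by
  simp only [lieB, fderiv_sum_smul_const_apply ha, fderiv_sum_smul_const_apply hb, sub_smul,
    Finset.sum_sub_distrib]

theorem lieB_sum_smul_const_eq_zero (e : Fin n → E) {A : E → Fin n → Fin n → ℝ}
    {w : Fin n → E → V} {z : E} (hA : DifferentiableAt ℝ A z)
    (hw : ∀ k, DifferentiableAt ℝ (w k) z)
    (hsymm : ∀ k l, fderiv ℝ (w k) z (e l) = fderiv ℝ (w l) z (e k))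
    (hli : LinearIndependent ℝ fun k => w k z)
    (hvert : ∀ i j, fderiv ℝ (fun y => ∑ k, A y j k • w k y) z (∑ l, A z i l • e l) = 0)
    (i j : Fin n) :
    lieB (fun y => ∑ l, A y i l • e l) (fun y => ∑ l, A y j l • e l) z = 0 := by
  rw [lieB_sum_smul_const e (differentiableAt_pi.1 hA i) (differentiableAt_pi.1 hA j)]
  refine Finset.sum_eq_zero fun l _ => ?_
  rw [fderiv_row_symm_of_fderiv_sum_smul_eq_zero hA hw hsymm hli hvert i j l, sub_self,
    zero_smul]

variable {e : Fin n → E} (π : E →L[ℝ] V)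

theorem map_lieB_sum_smul_const_left (hπe : ∀ l, π (e l) = 0) {a : E → Fin n → ℝ} {Y : E → E}
    {z : E} (ha : DifferentiableAt ℝ a z) (hY : DifferentiableAt ℝ Y z) :
    π (lieB (fun y => ∑ l, a y l • e l) Y z) =
      fderiv ℝ (fun y => π (Y y)) z (∑ l, a z l • e l) := by
  have hπY : fderiv ℝ (fun y => π (Y y)) z = π.comp (fderiv ℝ Y z) :=
    (π.hasFDerivAt.comp z hY.hasFDerivAt).fderiv
  simp [lieB, fderiv_sum_smul_const_apply ha, hπe, hπY]

theorem map_lieB_sum_smul_const_right (hπe : ∀ l, π (e l) = 0) {b : E → Fin n → ℝ}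
    (X : E → E) {z : E} (hb : DifferentiableAt ℝ b z) :
    π (lieB X (fun y => ∑ l, b y l • e l) z) = ∑ l, b z l • π (lieB X (fun _ => e l) z) := by
  simp [lieB, fderiv_sum_smul_const_apply hb, hπe]

theorem fderiv_map_lieB_const_comm {F : E → E} {z : E} (hF : ContDiffAt ℝ 2 F z) (c d : E) :
    fderiv ℝ (fun y => π (lieB F (fun _ => c) y)) z d =
      fderiv ℝ (fun y => π (lieB F (fun _ => d) y)) z c := by
  have hF' : DifferentiableAt ℝ (fderiv ℝ F) z :=
    (hF.fderiv_right (m := 1) le_rfl).differentiableAt one_ne_zero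
  have hsecond : ∀ c d, fderiv ℝ (fun y => π (lieB F (fun _ => c) y)) z d =
      -π (fderiv ℝ (fderiv ℝ F) z d c) := by
    intro c d
    have h : HasFDerivAt (fun y => π (fderiv ℝ F y c)) _ z :=
      π.hasFDerivAt.comp z (hF'.hasFDerivAt.clm_apply (hasFDerivAt_const c z))
    simp [lieB_const_right, h.fderiv]
  rw [hsecond, hsecond, hF.isSymmSndFDerivAt (by simp)]

theorem fderiv_map_lieB_const_mem_span (hπe : ∀ l, π (e l) = 0) {F : E → E} {z : E}
    {k : Fin n} (hFk : DifferentiableAt ℝ (lieB F fun _ => e k) z)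
    (hinv : ∀ l, lieB (fun _ => e l) (lieB F fun _ => e k) z ∈
      span ℝ (range (Sum.elim e fun m => lieB F (fun _ => e m) z)))
    (c : Fin n → ℝ) :
    fderiv ℝ (fun y => π (lieB F (fun _ => e k) y)) z (∑ l, c l • e l) ∈
      span ℝ (range fun m => π (lieB F (fun _ => e m) z)) := by
  have hder : fderiv ℝ (fun y => π (lieB F (fun _ => e k) y)) z =
      π.comp (fderiv ℝ (lieB F fun _ => e k) z) :=
    (π.hasFDerivAt.comp z hFk.hasFDerivAt).fderiv
  simp only [hder, map_sum, map_smul]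
  refine sum_mem fun l _ => smul_mem _ _ ?_
  have hl := map_mem_span_range_sumElim (π : E →ₗ[ℝ] V) hπe (hinv l)
  rwa [lieB_const_left] at hl

theorem map_lieB_lieB_sum_smul_const (hπe : ∀ l, π (e l) = 0) {U : Set E} (hU : IsOpen U)
    {F : E → E} (hF : ContDiffOn ℝ 2 F U) {a b : E → Fin n → ℝ} (hb : ContDiffOn ℝ 2 b U)
    {z : E} (hz : z ∈ U) (ha : DifferentiableAt ℝ a z) :
    π (lieB (fun y => ∑ l, a y l • e l) (lieB F fun y => ∑ l, b y l • e l) z) =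
      fderiv ℝ (fun y => ∑ k, b y k • π (lieB F (fun _ => e k) y)) z (∑ l, a z l • e l) := by
  have hVb : ContDiffOn ℝ 2 (fun y => ∑ l, b y l • e l) U :=
    ContDiffOn.sum fun l _ => (contDiffOn_pi.1 hb l).smul contDiffOn_const
  have hFVb : DifferentiableAt ℝ (lieB F fun y => ∑ l, b y l • e l) z :=
    ((hF.lieB hVb hU (s := 1) (by norm_num)).contDiffAt (hU.mem_nhds hz)).differentiableAt
      one_ne_zero
  have hπFVb : (fun y => π (lieB F (fun y => ∑ l, b y l • e l) y)) =ᶠ[𝓝 z]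
      fun y => ∑ k, b y k • π (lieB F (fun _ => e k) y) :=
    eventually_of_mem (hU.mem_nhds hz) fun y hy => map_lieB_sum_smul_const_right π hπe F
      ((hb.contDiffAt (hU.mem_nhds hy)).differentiableAt two_ne_zero)
  rw [map_lieB_sum_smul_const_left π hπe ha hFVb, hπFVb.fderiv_eq]

theorem exists_commuting_frame [FiniteDimensional ℝ V]
    (hπ : LinearMap.ker (π : E →ₗ[ℝ] V) = span ℝ (range e)) {U : Set E} (hU : IsOpen U)
    {F : E → E} (hF : ContDiffOn ℝ (⊤ : ℕ∞) F U)
    (hli : ∀ z ∈ U, LinearIndependent ℝ (Sum.elim e fun i => lieB F (fun _ => e i) z))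
    (hinv : ∀ z ∈ U, ∀ i j, lieB (fun _ => e i) (lieB F fun _ => e j) z ∈
      span ℝ (range (Sum.elim e fun k => lieB F (fun _ => e k) z)))
    {z₀ : E} (hz₀ : z₀ ∈ U) :
    ∃ U' ⊆ U, IsOpen U' ∧ z₀ ∈ U' ∧ ∃ A : E → Fin n → Fin n → ℝ,
      ContDiffOn ℝ (⊤ : ℕ∞) A U' ∧ (∀ z ∈ U', IsUnit (Matrix.of (A z))) ∧
      (∀ i j, ∀ z ∈ U',
        lieB (fun y => ∑ l, A y i l • e l) (fun y => ∑ l, A y j l • e l) z = 0) ∧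
      (∀ i j, ∀ z ∈ U',
        lieB (fun y => ∑ l, A y i l • e l) (lieB F fun y => ∑ l, A y j l • e l) z ∈
          span ℝ (range e)) := by
  have hπe : ∀ l, π (e l) = 0 := fun l =>
    LinearMap.mem_ker.1 (hπ ▸ subset_span ⟨l, rfl⟩ : e l ∈ LinearMap.ker (π : E →ₗ[ℝ] V))
  have hF2 : ∀ z ∈ U, ContDiffAt ℝ 2 F z := fun z hz =>
    (hF.contDiffAt (hU.mem_nhds hz)).of_le (WithTop.coe_le_coe.2 le_top)
  set w : Fin n → E → V := fun k y => π (lieB F (fun _ => e k) y)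
  have hW : ∀ k, ContDiffOn ℝ (⊤ : ℕ∞) (lieB F fun _ => e k) U := fun k =>
    hF.lieB contDiffOn_const hU (by simp)
  have hw : ∀ k, ContDiffOn ℝ (⊤ : ℕ∞) (w k) U := fun k => π.contDiff.comp_contDiffOn (hW k)
  have hwd : ∀ z ∈ U, ∀ k, DifferentiableAt ℝ (w k) z := fun z hz k =>
    ((hw k).contDiffAt (hU.mem_nhds hz)).differentiableAt (by simp)
  have hwli : ∀ z ∈ U, LinearIndependent ℝ fun k => w k z := fun z hz =>
    (hli z hz).map_sumElim_inr (π : E →ₗ[ℝ] V) hπ.le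
  have hwspan : ∀ z ∈ U, ∀ k (c : Fin n → ℝ),
      fderiv ℝ (w k) z (∑ l, c l • e l) ∈ span ℝ (range fun m => w m z) := fun z hz k =>
    fderiv_map_lieB_const_mem_span π hπe
      (((hW k).contDiffAt (hU.mem_nhds hz)).differentiableAt (by simp)) fun l => hinv z hz l k
  obtain ⟨U', hU'U, hU', hz₀U', A, hA, hAunit, L, hLA, hLinj⟩ :=
    exists_normalizing_matrix hU hw hz₀ (hwli z₀ hz₀)
  have hAd : ∀ z ∈ U', DifferentiableAt ℝ A z := fun z hz =>
    (hA.contDiffAt (hU'.mem_nhds hz)).differentiableAt (by simp)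
  have hrow : ∀ z ∈ U', ∀ j, DifferentiableAt ℝ (fun y => A y j) z := fun z hz =>
    differentiableAt_pi.1 (hAd z hz)
  have hvert : ∀ z ∈ U', ∀ i j,
      fderiv ℝ (fun y => ∑ k, A y j k • w k y) z (∑ l, A z i l • e l) = 0 := by
    intro z hz i j
    refine fderiv_apply_eq_zero_of_eventually_const ?_ (hLinj z hz)
      (eventually_of_mem (hU'.mem_nhds hz) fun y hy => hLA y hy j)
      (fderiv_sum_smul_mem_span (hrow z hz j) (hwd z (hU'U hz)) fun k => hwspan z (hU'U hz) k _)
    exact DifferentiableAt.fun_sum fun k _ =>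
      (differentiableAt_pi.1 (hrow z hz j) k).smul (hwd z (hU'U hz) k)
  refine ⟨U', hU'U, hU', hz₀U', A, hA, hAunit, fun i j z hz => ?_, fun i j z hz => ?_⟩
  · exact lieB_sum_smul_const_eq_zero e (hAd z hz) (hwd z (hU'U hz))
      (fun k l => fderiv_map_lieB_const_comm π (hF2 z (hU'U hz)) (e k) (e l))
      (hwli z (hU'U hz)) (hvert z hz) i j
  · rw [← hπ, LinearMap.mem_ker, ContinuousLinearMap.coe_coe,
      map_lieB_lieB_sum_smul_const π hπe hU' ((hF.mono hU'U).of_le (WithTop.coe_le_coe.2 le_top))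
        ((contDiffOn_pi.1 hA j).of_le (WithTop.coe_le_coe.2 le_top)) hz (hrow z hz i)]
    exact hvert z hz i j

end LieBracket

theorem ker_fst_eq_span_range_eVec (p n : ℕ) :
    LinearMap.ker ((ContinuousLinearMap.fst ℝ (Fin p → ℝ) (Fin n → ℝ) :
      (Fin p → ℝ) × (Fin n → ℝ) →ₗ[ℝ] Fin p → ℝ)) = span ℝ (range (eVec p n)) := by
  refine le_antisymm (fun x hx => ?_) (span_le.2 ?_)
  · refine (mem_span_range_iff_exists_fun ℝ).2 ⟨x.2, Prod.ext ?_ ?_⟩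
    · simpa [eVec, Prod.fst_sum] using (LinearMap.mem_ker.1 hx).symm
    · simp [eVec, Prod.snd_sum, ← pi_eq_sum_univ']
  · rintro _ ⟨k, rfl⟩
    simp [eVec]

theorem stmt6_general (p n : ℕ)
    (U : Set ((Fin p → ℝ) × (Fin n → ℝ))) (hU : IsOpen U)
    (F : ((Fin p → ℝ) × (Fin n → ℝ)) → (Fin p → ℝ) × (Fin n → ℝ))
    (hF : ContDiffOn ℝ (⊤ : ℕ∞) F U)
    (W : Fin n → ((Fin p → ℝ) × (Fin n → ℝ)) → (Fin p → ℝ) × (Fin n → ℝ))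
    (hW : ∀ i, W i = lieB F (fun _ => eVec p n i))
    (hli : ∀ z ∈ U, LinearIndependent ℝ
      (Sum.elim (fun i : Fin n => eVec p n i) (fun i : Fin n => W i z)))
    (hinv₁ : ∀ z ∈ U, ∀ i j, lieB (fun _ => eVec p n i) (W j) z ∈
      Submodule.span ℝ (Set.range (Sum.elim (fun k : Fin n => eVec p n k)
        (fun k : Fin n => W k z)))) :
    ∀ z₀ ∈ U, ∃ U' : Set ((Fin p → ℝ) × (Fin n → ℝ)), U' ⊆ U ∧ IsOpen U' ∧ z₀ ∈ U' ∧
      ∃ A : ((Fin p → ℝ) × (Fin n → ℝ)) → Fin n → Fin n → ℝ,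
        ContDiffOn ℝ (⊤ : ℕ∞) A U' ∧
        (∀ z ∈ U', IsUnit (Matrix.of (A z))) ∧
        (∀ i j, ∀ z ∈ U',
          lieB (fun w => ∑ k, A w i k • eVec p n k)
               (fun w => ∑ k, A w j k • eVec p n k) z = 0) ∧
        (∀ i j, ∀ z ∈ U',
          lieB (fun w => ∑ k, A w i k • eVec p n k)
               (lieB F (fun w => ∑ k, A w j k • eVec p n k)) z ∈
            Submodule.span ℝ (Set.range fun k : Fin n => eVec p n k)) := by
  intro z₀ hz₀
  obtain rfl : W = fun i => lieB F fun _ => eVec p n i := funext hW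
  exact exists_commuting_frame (ContinuousLinearMap.fst ℝ _ _) (ker_fst_eq_span_range_eVec p n)
    hU hF hli hinv₁ hz₀

theorem stmt6 (p n : ℕ)
    (U : Set ((Fin p → ℝ) × (Fin n → ℝ))) (hU : IsOpen U)
    (F : ((Fin p → ℝ) × (Fin n → ℝ)) → (Fin p → ℝ) × (Fin n → ℝ))
    (hF : ContDiffOn ℝ (⊤ : ℕ∞) F U)
    (W : Fin n → ((Fin p → ℝ) × (Fin n → ℝ)) → (Fin p → ℝ) × (Fin n → ℝ))
    (hW : ∀ i, W i = lieB F (fun _ => eVec p n i))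
    (hli : ∀ z ∈ U, LinearIndependent ℝ
      (Sum.elim (fun i : Fin n => eVec p n i) (fun i : Fin n => W i z)))
    (hinv₁ : ∀ z ∈ U, ∀ i j, lieB (fun _ => eVec p n i) (W j) z ∈
      Submodule.span ℝ (Set.range (Sum.elim (fun k : Fin n => eVec p n k)
        (fun k : Fin n => W k z))))
    (hinv₂ : ∀ z ∈ U, ∀ i j, lieB (W i) (W j) z ∈
      Submodule.span ℝ (Set.range (Sum.elim (fun k : Fin n => eVec p n k)
        (fun k : Fin n => W k z)))) :
    ∀ z₀ ∈ U, ∃ U' : Set ((Fin p → ℝ) × (Fin n → ℝ)), U' ⊆ U ∧ IsOpen U' ∧ z₀ ∈ U' ∧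
      ∃ A : ((Fin p → ℝ) × (Fin n → ℝ)) → Fin n → Fin n → ℝ,
        ContDiffOn ℝ (⊤ : ℕ∞) A U' ∧
        (∀ z ∈ U', IsUnit (Matrix.of (A z))) ∧
        (∀ i j, ∀ z ∈ U',
          lieB (fun w => ∑ k, A w i k • eVec p n k)
               (fun w => ∑ k, A w j k • eVec p n k) z = 0) ∧
        (∀ i j, ∀ z ∈ U',
          lieB (fun w => ∑ k, A w i k • eVec p n k)
               (lieB F (fun w => ∑ k, A w j k • eVec p n k)) z ∈
            Submodule.span ℝ (Set.range fun k : Fin n => eVec p n k)) :=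
  stmt6_general p n U hU F hF W hW hli hinv₁
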